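/- Let m ≥ 2, n ≥ 4, and consider the matching sequence on Δᵗ₂(K_m □ C_n). If σ ∈ 𝒞₁ and σ^c = {(0,0), (0,j)} for some 1 ≤ j ≤ n−1, then σ ∉ 𝒞_j and σ ∖ {(0,j−1)} ∉ 𝒞_j; in particular, σ ∉ 𝒞_n and σ ∖ {(0,j−1)} ∉ 𝒞_n. -/
import Mathlib


/-- Adjacency in the Cartesian product `K_m □ C_n`, on the vertex set
`{0,…,m-1} × {0,…,n-1} ⊆ ℕ × ℕ`: distinct `(i₁,j₁)`, `(i₂,j₂)` are adjacent iff
(`i₁ = i₂` and `|j₁ - j₂| ∈ {1, n-1}`) or (`j₁ = j₂` and `i₁ ≠ i₂`). -/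
def adjKmCn (m n : ℕ) (u v : ℕ × ℕ) : Prop :=
  u.1 < m ∧ u.2 < n ∧ v.1 < m ∧ v.2 < n ∧ u ≠ v ∧
    ((u.1 = v.1 ∧ (u.2 + 1 = v.2 ∨ v.2 + 1 = u.2 ∨
        u.2 + (n - 1) = v.2 ∨ v.2 + (n - 1) = u.2)) ∨
      (u.2 = v.2 ∧ u.1 ≠ v.1))

/-- The total 2-cut complex `Δᵗ₂(K_m □ C_n)`: faces are the subsets
`σ ⊆ {0,…,m-1} × {0,…,n-1}` whose complement contains a disconnected 2-set,
i.e. two distinct nonadjacent vertices. -/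
def facesKmCn (m n : ℕ) : Set (Finset (ℕ × ℕ)) :=
  {σ | σ ⊆ Finset.range m ×ˢ Finset.range n ∧
    ∃ u ∈ (Finset.range m ×ˢ Finset.range n) \ σ,
      ∃ v ∈ (Finset.range m ×ˢ Finset.range n) \ σ, u ≠ v ∧ ¬ adjKmCn m n u v}

/-- The matching sequence `𝒞₀, 𝒞₁, …` on `Δᵗ₂(K_m □ C_n)`, using the vertices
`(0,0), (0,1), …`: `𝒞₀` is the set of all faces, and `𝒞_{j+1}` consists of those
`σ ∈ 𝒞_j` lying in no pair of the matching
`M_j = { {σ∖{(0,j)}, σ∪{(0,j)}} : both σ∖{(0,j)} ∈ 𝒞_j and σ∪{(0,j)} ∈ 𝒞_j }`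
(a face `σ` lies in such a pair iff both `σ∖{(0,j)} ∈ 𝒞_j` and `σ∪{(0,j)} ∈ 𝒞_j`). -/
def matchSeqKmCn (m n : ℕ) : ℕ → Set (Finset (ℕ × ℕ))
  | 0 => facesKmCn m n
  | (j + 1) => {σ ∈ matchSeqKmCn m n j |
      ¬(σ.erase (0, j) ∈ matchSeqKmCn m n j ∧ insert (0, j) σ ∈ matchSeqKmCn m n j)}

lemma adjKmCn_symm {m n : ℕ} {u v : ℕ × ℕ} (h : adjKmCn m n u v) : adjKmCn m n v u := by
  obtain ⟨h1, h2, h3, h4, h5, h6⟩ := h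
  refine ⟨h3, h4, h1, h2, h5.symm, ?_⟩
  rcases h6 with ⟨e, d⟩ | ⟨e, d⟩
  · exact Or.inl ⟨e.symm, by tauto⟩
  · exact Or.inr ⟨e.symm, d.symm⟩

lemma adj_col {m n : ℕ} (hm : 0 < m) {a b : ℕ} (ha : a < n) (hb : b < n)
    (hne : a ≠ b) (h : a + 1 = b ∨ b + 1 = a ∨ a + (n - 1) = b ∨ b + (n - 1) = a) :
    adjKmCn m n (0, a) (0, b) :=
  ⟨hm, ha, hm, hb, by simpa [Prod.ext_iff] using hne, Or.inl ⟨rfl, h⟩⟩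

lemma nadj_col {m n a b : ℕ} (h1 : a + 1 ≠ b) (h2 : b + 1 ≠ a)
    (h3 : a + (n - 1) ≠ b) (h4 : b + (n - 1) ≠ a) :
    ¬ adjKmCn m n (0, a) (0, b) := by
  rintro ⟨-, -, -, -, -, ⟨-, h⟩ | ⟨-, h⟩⟩
  · have h' : a + 1 = b ∨ b + 1 = a ∨ a + (n - 1) = b ∨ b + (n - 1) = a := h
    omega
  · exact h rfl

lemma matchSeq_succ {m n j : ℕ} {σ : Finset (ℕ × ℕ)} :
    σ ∈ matchSeqKmCn m n (j + 1) ↔ σ ∈ matchSeqKmCn m n j ∧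
      ¬(σ.erase (0, j) ∈ matchSeqKmCn m n j ∧ insert (0, j) σ ∈ matchSeqKmCn m n j) :=
  Iff.rfl

lemma matchSeq_anti {m n : ℕ} {a b : ℕ} (h : a ≤ b) :
    matchSeqKmCn m n b ⊆ matchSeqKmCn m n a := by
  induction b with
  | zero =>
    obtain rfl : a = 0 := by omega
    exact subset_rfl
  | succ b ih =>
    rcases Nat.lt_or_ge a (b + 1) with h' | h'
    · exact fun σ hs => ih (by omega) (matchSeq_succ.mp hs).1
    · obtain rfl : a = b + 1 := by omega
      exact subset_rfl
/-- Proposition 3.15(i): let `m ≥ 2` and `n ≥ 4`.  If `σ ∈ 𝒞₁` and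
`σᶜ = {(0,0), (0,j)}` for some `1 ≤ j ≤ n-1`, then `σ ∉ 𝒞_j` and
`σ ∖ {(0,j-1)} ∉ 𝒞_j`; in particular `σ ∉ 𝒞_n` and `σ ∖ {(0,j-1)} ∉ 𝒞_n`. -/
theorem stmt17 (m n : ℕ) (hm : 2 ≤ m) (hn : 4 ≤ n)
    (σ : Finset (ℕ × ℕ)) (hσ : σ ∈ matchSeqKmCn m n 1)
    (j : ℕ) (hj1 : 1 ≤ j) (hj2 : j ≤ n - 1)
    (hc : (Finset.range m ×ˢ Finset.range n) \ σ = {(0, 0), (0, j)}) :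
    (σ ∉ matchSeqKmCn m n j ∧ σ.erase (0, j - 1) ∉ matchSeqKmCn m n j) ∧
      (σ ∉ matchSeqKmCn m n n ∧ σ.erase (0, j - 1) ∉ matchSeqKmCn m n n) := by
  have h0m : 0 < m := by omega
  have hVmem : ∀ b : ℕ, b < n → ((0 : ℕ), b) ∈ Finset.range m ×ˢ Finset.range n := by
    intro b hb
    simp only [Finset.mem_product, Finset.mem_range]
    exact ⟨h0m, hb⟩
  have hσ0 : σ ∈ facesKmCn m n := (matchSeq_succ.mp hσ).1
  obtain ⟨hsub, u, hu, v, hv, huv, hnadj⟩ := hσ0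
  have hjlt : j < n := by
    have h1 : ((0 : ℕ), j) ∈ (Finset.range m ×ˢ Finset.range n) \ σ := by
      rw [hc]; simp
    have := (Finset.mem_sdiff.mp h1).1
    simp only [Finset.mem_product, Finset.mem_range] at this
    exact this.2
  -- establish 2 ≤ j ≤ n - 2
  have hjb : 2 ≤ j ∧ j ≤ n - 2 := by
    rw [hc] at hu hv
    simp only [Finset.mem_insert, Finset.mem_singleton] at hu hv
    by_contra hcon
    rcases hu with rfl | rfl <;> rcases hv with rfl | rfl
    · exact huv rfl
    · exact hnadj (adj_col h0m (by omega) hjlt (by omega) (by omega))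
    · exact hnadj (adj_col h0m hjlt (by omega) (by omega) (by omega))
    · exact huv rfl
  obtain ⟨hjb1, hjb2⟩ := hjb
  have hnadj0j : ¬ adjKmCn m n ((0 : ℕ), (0 : ℕ)) (0, j) :=
    nadj_col (by omega) (by omega) (by omega) (by omega)
  have hnσ0 : ((0 : ℕ), (0 : ℕ)) ∉ σ := by
    have h1 : ((0 : ℕ), (0 : ℕ)) ∈ (Finset.range m ×ˢ Finset.range n) \ σ := by
      rw [hc]; simp
    exact (Finset.mem_sdiff.mp h1).2
  have hnσj : ((0 : ℕ), j) ∉ σ := by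
    have h1 : ((0 : ℕ), j) ∈ (Finset.range m ×ˢ Finset.range n) \ σ := by
      rw [hc]; simp
    exact (Finset.mem_sdiff.mp h1).2
  have hmemσ : ∀ k : ℕ, k < n → k ≠ 0 → k ≠ j → ((0 : ℕ), k) ∈ σ := by
    intro k hk hk0 hkj
    by_contra hcon
    have h1 : ((0 : ℕ), k) ∈ (Finset.range m ×ˢ Finset.range n) \ σ :=
      Finset.mem_sdiff.mpr ⟨hVmem k hk, hcon⟩
    rw [hc] at h1
    simp only [Finset.mem_insert, Finset.mem_singleton, Prod.ext_iff] at h1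
    omega
  have hj1σ : ((0 : ℕ), j - 1) ∈ σ := hmemσ (j - 1) (by omega) (by omega) (by omega)
  set τ : Finset (ℕ × ℕ) := σ.erase (0, j - 1) with hτdef
  have hnτ0 : ((0 : ℕ), (0 : ℕ)) ∉ τ := fun h => hnσ0 (Finset.mem_of_mem_erase h)
  have hnτj : ((0 : ℕ), j) ∉ τ := fun h => hnσj (Finset.mem_of_mem_erase h)
  have hτsub : τ ⊆ Finset.range m ×ˢ Finset.range n := (Finset.erase_subset _ _).trans hsub
  have face_mk : ∀ ρ : Finset (ℕ × ℕ), ρ ⊆ Finset.range m ×ˢ Finset.range n →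
      ∀ a b : ℕ, a < n → b < n → ((0 : ℕ), a) ∉ ρ → ((0 : ℕ), b) ∉ ρ → a ≠ b →
      ¬ adjKmCn m n (0, a) (0, b) → ρ ∈ facesKmCn m n := by
    intro ρ hρ a b ha hb hha hhb hne hnadj'
    exact ⟨hρ, (0, a), Finset.mem_sdiff.mpr ⟨hVmem a ha, hha⟩,
      (0, b), Finset.mem_sdiff.mpr ⟨hVmem b hb, hhb⟩,
      by simpa [Prod.ext_iff] using hne, hnadj'⟩
  have notC1 : ∀ ρ : Finset (ℕ × ℕ), ρ.erase (0, 0) ∈ facesKmCn m n →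
      insert ((0 : ℕ), (0 : ℕ)) ρ ∈ facesKmCn m n → ρ ∉ matchSeqKmCn m n 1 :=
    fun ρ h1 h2 hρ => (matchSeq_succ.mp hρ).2 ⟨h1, h2⟩
  -- the sets σ.erase (0,k) die at step 0, for 1 ≤ k ≤ j-2
  have haux : ∀ k : ℕ, 1 ≤ k → k + 2 ≤ j → σ.erase (0, k) ∉ matchSeqKmCn m n 1 := by
    intro k hk1 hk2
    apply notC1
    · rw [Finset.erase_eq_of_notMem (fun h => hnσ0 (Finset.mem_of_mem_erase h))]
      exact face_mk _ ((Finset.erase_subset _ _).trans hsub) 0 j (by omega) hjlt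
        (fun h => hnσ0 (Finset.mem_of_mem_erase h))
        (fun h => hnσj (Finset.mem_of_mem_erase h)) (by omega) hnadj0j
    · refine face_mk _ (Finset.insert_subset (hVmem 0 (by omega))
        ((Finset.erase_subset _ _).trans hsub)) k j (by omega) hjlt ?_ ?_ (by omega)
        (nadj_col (by omega) (by omega) (by omega) (by omega))
      · intro h
        rcases Finset.mem_insert.mp h with h | h
        · simp only [Prod.ext_iff] at h; omega
        · exact absurd h (Finset.notMem_erase _ _)
      · intro h
        rcases Finset.mem_insert.mp h with h | h
        · simp only [Prod.ext_iff] at h; omega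
        · exact hnσj (Finset.mem_of_mem_erase h)
  -- the sets τ.erase (0,k) die at step 0, for 1 ≤ k ≤ j-2
  have hauxτ : ∀ k : ℕ, 1 ≤ k → k + 2 ≤ j → τ.erase (0, k) ∉ matchSeqKmCn m n 1 := by
    intro k hk1 hk2
    apply notC1
    · rw [Finset.erase_eq_of_notMem (fun h => hnτ0 (Finset.mem_of_mem_erase h))]
      exact face_mk _ ((Finset.erase_subset _ _).trans hτsub) 0 j (by omega) hjlt
        (fun h => hnτ0 (Finset.mem_of_mem_erase h))
        (fun h => hnτj (Finset.mem_of_mem_erase h)) (by omega) hnadj0j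
    · refine face_mk _ (Finset.insert_subset (hVmem 0 (by omega))
        ((Finset.erase_subset _ _).trans hτsub)) k j (by omega) hjlt ?_ ?_ (by omega)
        (nadj_col (by omega) (by omega) (by omega) (by omega))
      · intro h
        rcases Finset.mem_insert.mp h with h | h
        · simp only [Prod.ext_iff] at h; omega
        · exact absurd h (Finset.notMem_erase _ _)
      · intro h
        rcases Finset.mem_insert.mp h with h | h
        · simp only [Prod.ext_iff] at h; omega
        · exact hnτj (Finset.mem_of_mem_erase h)
  -- τ survives step 0
  have hτC1 : τ ∈ matchSeqKmCn m n 1 := by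
    rw [show (1 : ℕ) = 0 + 1 from rfl, matchSeq_succ]
    constructor
    · exact face_mk τ hτsub 0 j (by omega) hjlt hnτ0 hnτj (by omega) hnadj0j
    · rintro ⟨-, hins⟩
      obtain ⟨-, u', hu', v', hv', huv', hnadj'⟩ := hins
      have hchar : ∀ w : ℕ × ℕ,
          w ∈ (Finset.range m ×ˢ Finset.range n) \ insert ((0 : ℕ), (0 : ℕ)) τ →
          w = (0, j - 1) ∨ w = (0, j) := by
        intro w hw
        obtain ⟨hwV, hw2⟩ := Finset.mem_sdiff.mp hw
        rw [Finset.mem_insert] at hw2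
        push_neg at hw2
        obtain ⟨hw0, hwτ⟩ := hw2
        by_cases hwj1 : w = ((0 : ℕ), j - 1)
        · exact Or.inl hwj1
        · have hwσ : w ∉ σ := fun h => hwτ (Finset.mem_erase.mpr ⟨hwj1, h⟩)
          have h1 : w ∈ (Finset.range m ×ˢ Finset.range n) \ σ :=
            Finset.mem_sdiff.mpr ⟨hwV, hwσ⟩
          rw [hc] at h1
          simp only [Finset.mem_insert, Finset.mem_singleton] at h1
          rcases h1 with h1 | h1
          · exact absurd h1 hw0
          · exact Or.inr h1
      rcases hchar u' hu' with rfl | rfl <;> rcases hchar v' hv' with rfl | rfl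
      · exact huv' rfl
      · exact hnadj' (adj_col h0m (by omega) hjlt (by omega) (by omega))
      · exact hnadj' (adj_col h0m hjlt (by omega) (by omega) (by omega))
      · exact huv' rfl
  -- σ and τ survive up to step j-1
  have hC : ∀ d : ℕ, 1 + d ≤ j - 1 →
      σ ∈ matchSeqKmCn m n (1 + d) ∧ τ ∈ matchSeqKmCn m n (1 + d) := by
    intro d
    induction d with
    | zero => intro _; exact ⟨hσ, hτC1⟩
    | succ d ih =>
      intro hd
      obtain ⟨ihσ, ihτ⟩ := ih (by omega)
      have hk1 : 1 ≤ 1 + d := by omega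
      have hk2 : (1 + d) + 2 ≤ j := by omega
      constructor
      · rw [show 1 + (d + 1) = (1 + d) + 1 from by omega, matchSeq_succ]
        exact ⟨ihσ, fun hp => haux (1 + d) hk1 hk2 (matchSeq_anti hk1 hp.1)⟩
      · rw [show 1 + (d + 1) = (1 + d) + 1 from by omega, matchSeq_succ]
        exact ⟨ihτ, fun hp => hauxτ (1 + d) hk1 hk2 (matchSeq_anti hk1 hp.1)⟩
  have hfin : σ ∈ matchSeqKmCn m n (j - 1) ∧ τ ∈ matchSeqKmCn m n (j - 1) := by
    have h1 := hC (j - 2) (by omega)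
    rwa [show 1 + (j - 2) = j - 1 from by omega] at h1
  have hjeq : j - 1 + 1 = j := by omega
  have hinsσ : insert ((0 : ℕ), j - 1) σ = σ := Finset.insert_eq_self.mpr hj1σ
  have hστ : insert ((0 : ℕ), j - 1) τ = σ := Finset.insert_erase hj1σ
  have hσnotj : σ ∉ matchSeqKmCn m n j := by
    intro h
    rw [← hjeq, matchSeq_succ] at h
    exact h.2 ⟨hfin.2, by rw [hinsσ]; exact hfin.1⟩
  have hτnotj : τ ∉ matchSeqKmCn m n j := by
    intro h
    rw [← hjeq, matchSeq_succ] at h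
    apply h.2
    constructor
    · rw [hτdef, Finset.erase_idem]
      exact hfin.2
    · rw [hστ]
      exact hfin.1
  exact ⟨⟨hσnotj, hτnotj⟩,
    ⟨fun h => hσnotj (matchSeq_anti (by omega : j ≤ n) h),
     fun h => hτnotj (matchSeq_anti (by omega : j ≤ n) h)⟩⟩
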